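/- Let X be a real Banach space. Then X is a Gelfand-Phillips space (i.e. every limited subset of X is relatively norm-compact) if and only if for every Lipschitz function f : X → ℝ and every x ∈ X, f is Gâteaux differentiable at x if and only if f is limited differentiable at x. -/

import Mathlib

open Bornology Filter Metric Set
open scoped NNReal Pointwise

section Defs

variable {X Z : Type*} [NormedAddCommGroup X] [NormedSpace ℝ X]
variable [NormedAddCommGroup Z] [NormedSpace ℝ Z]

/-- `f` is `β`-differentiable at `x₀` with differential `L`. -/
def BetaDiffAt (β : Set (Set X)) (f : X → Z) (x₀ : X) (L : X →L[ℝ] Z) : Prop :=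
  ∀ A ∈ β, ∀ ε > 0, ∃ δ > 0, ∀ t : ℝ, t ≠ 0 → |t| < δ → ∀ u ∈ A,
    ‖t⁻¹ • (f (x₀ + t • u) - f x₀) - L u‖ ≤ ε

/-- The Gâteaux bornology: nonempty finite sets. -/
def gateauxB (X : Type*) [NormedAddCommGroup X] : Set (Set X) :=
  {A | A.Nonempty ∧ A.Finite}

/-- The Fréchet bornology: nonempty bounded sets. -/
def frechetB (X : Type*) [NormedAddCommGroup X] : Set (Set X) :=
  {A | A.Nonempty ∧ IsBounded A}

/-- The Hadamard bornology: nonempty relatively norm-compact sets. -/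
def hadamardB (X : Type*) [NormedAddCommGroup X] : Set (Set X) :=
  {A | A.Nonempty ∧ IsCompact (closure A)}

/-- A bounded set is limited if every weak*-null sequence converges to 0 uniformly on it. -/
def IsLimitedSet (A : Set X) : Prop :=
  IsBounded A ∧ ∀ φ : ℕ → X →L[ℝ] ℝ,
    (∀ x : X, Tendsto (fun n => φ n x) atTop (nhds 0)) →
    ∀ ε > 0, ∃ N : ℕ, ∀ n ≥ N, ∀ x ∈ A, |φ n x| ≤ ε

/-- The limited bornology: nonempty limited sets. -/
def limitedB (X : Type*) [NormedAddCommGroup X] [NormedSpace ℝ X] : Set (Set X) :=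
  {A | A.Nonempty ∧ IsLimitedSet A}

/-- A set is relatively weakly compact if its closure in the weak topology is compact. -/
def RelWeaklyCompact (A : Set X) : Prop :=
  IsCompact (closure (⇑(toWeakSpace ℝ X) '' A) : Set (WeakSpace ℝ X))

/-- The weak-Hadamard bornology: nonempty relatively weakly compact sets. -/
def wHB (X : Type*) [NormedAddCommGroup X] [NormedSpace ℝ X] : Set (Set X) :=
  {A | A.Nonempty ∧ RelWeaklyCompact A}

/-- A bornology (as a family of sets). -/
def IsBornologyFamily (β : Set (Set X)) : Prop :=
  (∀ A ∈ β, A.Nonempty ∧ IsBounded A) ∧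
  (⋃ A ∈ β, A) = univ ∧
  (∀ A ∈ β, ∀ B ∈ β, A ∪ B ∈ β) ∧
  (∀ A ∈ β, ∀ B : Set X, B ⊆ A → B.Nonempty → B ∈ β)

/-- A vector bornology. -/
def IsVectorBornology (β : Set (Set X)) : Prop :=
  IsBornologyFamily β ∧
  (∀ A ∈ β, balancedHull ℝ A ∈ β) ∧
  (∀ A ∈ β, ∀ (x : X) (l : ℝ), (fun z => x + l • z) '' A ∈ β)

/-- `(x, δ)` witnesses property (S) for the set `A`. -/
def WitnessS (β : Set (Set X)) (A : Set X) (x : ℕ → X) (δ : ℝ) : Prop :=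
  (∀ n, x n ∈ A) ∧ 0 < δ ∧
  ∀ nk : ℕ → ℕ, StrictMono nk → ∀ y : ℕ → X,
    (∀ k, ‖y k - x (nk k)‖ ≤ δ) → Set.range y ∉ β

/-- Property (S) for a bornology. -/
def PropertyS (β : Set (Set X)) : Prop :=
  ∀ A : Set X, IsBounded A → A ∉ β → ∃ x δ, WitnessS β A x δ

/-- `T` is `β`-positively homogeneous differentiable at `y` with p.h. differential `R`. -/
def PHDiffAt {Y : Type*} [NormedAddCommGroup Y] [NormedSpace ℝ Y]
    (β : Set (Set Y)) (T : Y → X) (y : Y) (R : Y → X) : Prop :=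
  Continuous R ∧ (∀ c : ℝ, 0 ≤ c → ∀ z, R (c • z) = c • R z) ∧
  ∀ A ∈ β, ∀ ε > 0, ∃ δ > 0, ∀ t : ℝ, 0 < t → t < δ → ∀ z ∈ A,
    ‖t⁻¹ • (T (y + t • z) - T y) - R z‖ ≤ ε

end Defs

/-!
If limited sets are relatively compact, they are totally bounded, and for a Lipschitz function
the Gâteaux difference quotients, being equi-Lipschitz in the direction, converge uniformly on
totally bounded sets.

Conversely, a limited set `A` that is not relatively compact is, `X` being complete, not totally
bounded, so it contains an `ε`-separated sequence `yₙ` with `‖yₙ‖ ≥ ε`. The distance `f` to the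
complement of `⋃ₙ B(2⁻ⁿ yₙ, 2⁻ⁿ ε / 4)` is `1`-Lipschitz. A line through `0` meets only finitely
many of these balls (after rescaling by `2ⁿ`, it would pass within `ε / 4` of infinitely many
`yₙ`), and none of them contains `0`, so `f` vanishes near `0` on every line and is Gâteaux
differentiable there. But `f (2⁻ⁿ yₙ) ≥ 2⁻ⁿ ε / 4` while `f ≥ 0 = f 0`, so the second difference
quotients of `f` along `A` do not tend to `0` uniformly and `f` is not limited differentiable.
-/

open Topology

section BetaDiff

variable {X Z : Type*} [NormedAddCommGroup X] [NormedSpace ℝ X]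
variable [NormedAddCommGroup Z] [NormedSpace ℝ Z]

theorem BetaDiffAt.mono {β β' : Set (Set X)} {f : X → Z} {x : X} {L : X →L[ℝ] Z}
    (h : BetaDiffAt β' f x L) (hβ : β ⊆ β') : BetaDiffAt β f x L :=
  fun A hA => h A (hβ hA)

theorem Set.Finite.isLimitedSet {A : Set X} (hA : A.Finite) : IsLimitedSet A := by
  refine ⟨hA.isBounded, fun φ hφ ε hε => eventually_atTop.1 ?_⟩
  refine hA.eventually_all.2 fun x _ => ?_
  have : Tendsto (fun n => |φ n x|) atTop (𝓝 0) := by simpa using (hφ x).abs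
  exact (this.eventually (eventually_lt_nhds hε)).mono fun n => le_of_lt

theorem gateauxB_subset_limitedB : gateauxB X ⊆ limitedB X :=
  fun _ ⟨hne, hfin⟩ => ⟨hne, hfin.isLimitedSet⟩

theorem betaDiffAt_gateauxB_zero_of_eventually_eq {f : X → Z} {x : X}
    (h : ∀ u, ∀ᶠ t in 𝓝 (0 : ℝ), f (x + t • u) = f x) : BetaDiffAt (gateauxB X) f x 0 := by
  rintro A ⟨-, hA⟩ ε hε
  obtain ⟨δ, hδ, hδA⟩ := Metric.eventually_nhds_iff.1 (hA.eventually_all.2 fun u _ => h u)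
  refine ⟨δ, hδ, fun t _ ht u hu => ?_⟩
  rw [hδA (by rwa [Real.dist_0_eq_abs]) u hu]
  simpa using hε.le

theorem LipschitzWith.norm_inv_smul_sub_le {f : X → Z} {K : ℝ≥0} (hf : LipschitzWith K f)
    (x u v : X) (t : ℝ) : ‖t⁻¹ • (f (x + t • u) - f (x + t • v))‖ ≤ K * ‖u - v‖ := by
  rcases eq_or_ne t 0 with rfl | ht
  · simp only [inv_zero, zero_smul, norm_zero]
    positivity
  calc ‖t⁻¹ • (f (x + t • u) - f (x + t • v))‖
      = |t|⁻¹ * dist (f (x + t • u)) (f (x + t • v)) := by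
        rw [norm_smul, norm_inv, Real.norm_eq_abs, dist_eq_norm]
    _ ≤ |t|⁻¹ * (K * dist (x + t • u) (x + t • v)) := by gcongr; exact hf.dist_le_mul _ _
    _ = K * ‖u - v‖ := by
        rw [dist_add_left, dist_eq_norm, ← smul_sub, norm_smul, Real.norm_eq_abs]
        field_simp

theorem BetaDiffAt.of_gateauxB_of_lipschitzWith {β : Set (Set X)} {f : X → Z} {K : ℝ≥0}
    (hf : LipschitzWith K f) {x : X} {L : X →L[ℝ] Z} (h : BetaDiffAt (gateauxB X) f x L)
    (hβ : ∀ A ∈ β, TotallyBounded A) : BetaDiffAt β f x L := by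
  intro A hA ε hε
  set ρ := ε / 2 / (K + ‖L‖ + 1)
  have hρ : 0 < ρ := by positivity
  obtain ⟨s, hs, hAs⟩ := totallyBounded_iff.1 (hβ A hA) ρ hρ
  obtain ⟨δ, hδ, hδs⟩ := h (insert 0 s) ⟨insert_nonempty _ _, hs.insert 0⟩ (ε / 2) (half_pos hε)
  refine ⟨δ, hδ, fun t ht htδ u hu => ?_⟩
  obtain ⟨v, hv, huv⟩ : ∃ v ∈ s, ‖u - v‖ < ρ := by simpa [dist_eq_norm] using hAs hu
  have hnet : (K + ‖L‖) * ‖u - v‖ ≤ ε / 2 :=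
    calc (K + ‖L‖) * ‖u - v‖ ≤ (K + ‖L‖ + 1) * ρ :=
          mul_le_mul (by linarith) huv.le (norm_nonneg _) (by positivity)
      _ = ε / 2 := mul_div_cancel₀ _ (by positivity)
  calc ‖t⁻¹ • (f (x + t • u) - f x) - L u‖
      = ‖t⁻¹ • (f (x + t • u) - f (x + t • v)) + (t⁻¹ • (f (x + t • v) - f x) - L v)
          + L (v - u)‖ := by
        rw [map_sub, smul_sub, smul_sub, smul_sub]; congr 1; abel
    _ ≤ K * ‖u - v‖ + ε / 2 + ‖L‖ * ‖u - v‖ := by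
        refine norm_add₃_le.trans (add_le_add_three (hf.norm_inv_smul_sub_le x u v t)
          (hδs t ht htδ v (mem_insert_of_mem _ hv)) ?_)
        rw [norm_sub_rev]
        exact L.le_opNorm _
    _ ≤ ε := by linarith

theorem BetaDiffAt.exists_second_difference_lt {β : Set (Set X)} {f : X → ℝ} {x : X}
    {L : X →L[ℝ] ℝ} (h : BetaDiffAt β f x L) {A : Set X} (hA : A ∈ β) {a : ℝ} (ha : 0 < a) :
    ∃ δ > 0, ∀ t, 0 < t → t < δ → ∀ u ∈ A,
      f (x + t • u) + f (x + (-t) • u) - 2 * f x < a * t := by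
  obtain ⟨δ, hδ, hδA⟩ := h A hA (a / 4) (by positivity)
  refine ⟨δ, hδ, fun t ht htδ u hu => ?_⟩
  have h₁ := hδA t ht.ne' (by rwa [abs_of_pos ht]) u hu
  have h₂ := hδA (-t) (neg_ne_zero.2 ht.ne') (by rwa [abs_neg, abs_of_pos ht]) u hu
  rw [Real.norm_eq_abs, smul_eq_mul, abs_le] at h₁ h₂
  rw [inv_neg, neg_mul] at h₂
  have : t⁻¹ * (f (x + t • u) + f (x + (-t) • u) - 2 * f x) ≤ a / 2 := by linarith
  linarith [(inv_mul_le_iff₀ ht).1 this, mul_pos ha ht]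

end BetaDiff

theorem TotallyBounded.finite_preimage_thickening {α ι : Type*} [PseudoMetricSpace α]
    {K : Set α} (hK : TotallyBounded K) {y : ι → α} {ε ρ : ℝ}
    (hy : Pairwise fun i j => ε ≤ dist (y i) (y j)) (hρ : 2 * ρ < ε) :
    (y ⁻¹' thickening ρ K).Finite := by
  obtain ⟨s, hs, hKs⟩ := totallyBounded_iff.1 hK (ε / 2 - ρ) (by linarith)
  have hnear : y ⁻¹' thickening ρ K ⊆ ⋃ z ∈ s, {i | dist (y i) z < ε / 2} := by
    intro i hi
    obtain ⟨k, hk, hik⟩ := mem_thickening_iff.1 hi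
    obtain ⟨z, hz, hkz⟩ := mem_iUnion₂.1 (hKs hk)
    exact mem_iUnion₂.2 ⟨z, hz, show dist (y i) z < ε / 2 by
      linarith [dist_triangle (y i) k z, mem_ball.1 hkz]⟩
  refine (hs.biUnion fun z _ => Set.Subsingleton.finite fun i (hi : dist _ z < _) j
    (hj : dist _ z < _) => ?_).subset hnear
  by_contra hne
  linarith [hy hne, dist_triangle_right (y i) (y j) z]

theorem exists_separated_seq_of_not_totallyBounded {X : Type*} [SeminormedAddCommGroup X]
    {A : Set X} (hA : ¬TotallyBounded A) :
    ∃ ε > 0, ∃ y : ℕ → X, (∀ n, y n ∈ A ∧ ε ≤ ‖y n‖) ∧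
      Pairwise fun i j => ε ≤ dist (y i) (y j) := by
  obtain ⟨ε, hε, hA⟩ : ∃ ε > 0, ∀ s : Set X, s.Finite → ¬A ⊆ ⋃ z ∈ s, ball z ε := by
    simpa [totallyBounded_iff] using hA
  obtain ⟨y, hyA, hy⟩ := exists_seq_of_forall_finset_exists (fun x => x ∈ A ∧ ε ≤ ‖x‖)
    (fun x y => ε ≤ dist x y) fun s _ => by
      obtain ⟨y, hyA, hy⟩ := not_subset.1 (hA _ (s.finite_toSet.insert 0))
      simp only [mem_iUnion₂, mem_ball, not_exists, not_lt, mem_insert_iff,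
        forall_eq_or_imp, dist_zero_right, Finset.mem_coe] at hy
      exact ⟨y, ⟨hyA, hy.1⟩, fun x hx => by rw [dist_comm]; exact hy.2 x hx⟩
  refine ⟨ε, hε, y, hyA, fun i j hij => ?_⟩
  rcases hij.lt_or_gt with h | h
  · exact hy i j h
  · rw [dist_comm]; exact hy j i h

section Counterexample

variable {X : Type*} [NormedAddCommGroup X] [NormedSpace ℝ X]

theorem finite_setOf_dist_smul_lt {y : ℕ → X} {ε ρ M : ℝ}
    (hy : Pairwise fun i j => ε ≤ dist (y i) (y j)) (hyM : ∀ n, ‖y n‖ ≤ M) (hρ : 2 * ρ < ε)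
    (u : X) : {n | ∃ t : ℝ, dist (y n) (t • u) < ρ}.Finite := by
  have hK : TotallyBounded (((↑) : (ℝ ∙ u) → X) '' closedBall 0 (M + ρ)) :=
    ((isCompact_closedBall _ _).image continuous_subtype_val).totallyBounded
  refine (hK.finite_preimage_thickening hy hρ).subset fun n ⟨t, ht⟩ => ?_
  refine mem_thickening_iff.2 ⟨t • u, ⟨⟨t • u, Submodule.smul_mem _ _
    (Submodule.mem_span_singleton_self u)⟩, ?_, rfl⟩, ht⟩
  rw [mem_closedBall_zero_iff, Submodule.coe_norm]
  linarith [hyM n, norm_le_norm_add_norm_sub' (t • u) (y n), dist_eq_norm (y n) (t • u),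
    norm_sub_rev (t • u) (y n)]

theorem exists_lipschitzWith_gateaux_not_betaDiffAt {A : Set X} (hA : IsBounded A)
    (hA' : ¬TotallyBounded A) {β : Set (Set X)} (hAβ : A ∈ β) :
    ∃ f : X → ℝ, LipschitzWith 1 f ∧ BetaDiffAt (gateauxB X) f 0 0 ∧
      ∀ L, ¬BetaDiffAt β f 0 L := by
  obtain ⟨ε, hε, y, hyA, hy⟩ := exists_separated_seq_of_not_totallyBounded hA'
  obtain ⟨M, hM⟩ := isBounded_iff_forall_norm_le.1 hA
  set s : ℕ → ℝ := fun n => 2⁻¹ ^ n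
  have hs : ∀ n, 0 < s n := fun n => by positivity
  set U := ⋃ n, ball (s n • y n) (s n * (ε / 4))
  have hnot0 : ∀ n, (0 : X) ∉ closedBall (s n • y n) (s n * (ε / 4)) := by
    intro n h
    rw [mem_closedBall, dist_comm, dist_zero_right, norm_smul, Real.norm_of_nonneg (hs n).le] at h
    nlinarith [(hyA n).2, hs n]
  have hU0 : (0 : X) ∈ Uᶜ := by
    simpa [U] using fun n hn => hnot0 n (ball_subset_closedBall hn)
  refine ⟨(infDist · Uᶜ), lipschitz_infDist_pt _,
    betaDiffAt_gateauxB_zero_of_eventually_eq fun u => ?_, fun L hL => ?_⟩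
  · set hits := {n | ∃ t : ℝ, t • u ∈ ball (s n • y n) (s n * (ε / 4))}
    have hhits : hits.Finite := by
      refine (finite_setOf_dist_smul_lt (ρ := ε / 4) hy (fun n => hM _ (hyA n).1)
        (by linarith) u).subset ?_
      rintro n ⟨t, ht⟩
      refine ⟨(s n)⁻¹ * t, ?_⟩
      rw [mem_ball, dist_comm] at ht
      calc dist (y n) (((s n)⁻¹ * t) • u)
          = (s n)⁻¹ * dist (s n • y n) (t • u) := by
            have := dist_smul₀ (s n)⁻¹ (s n • y n) (t • u)
            rwa [inv_smul_smul₀ (hs n).ne', Real.norm_of_nonneg (inv_nonneg.2 (hs n).le),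
              ← mul_smul] at this
        _ < (s n)⁻¹ * (s n * (ε / 4)) := by gcongr
        _ = ε / 4 := inv_mul_cancel_left₀ (hs n).ne' _
    have hsmul : Tendsto (fun t : ℝ => t • u) (𝓝 0) (𝓝 0) :=
      (continuous_id.smul continuous_const).tendsto' _ _ (zero_smul _ _)
    have hfar : ∀ᶠ t in 𝓝 (0 : ℝ), ∀ n ∈ hits, t • u ∉ closedBall (s n • y n) (s n * (ε / 4)) :=
      hhits.eventually_all.2 fun n _ =>
        hsmul.eventually (isClosed_closedBall.isOpen_compl.mem_nhds (hnot0 n))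
    filter_upwards [hfar] with t ht
    rw [zero_add, infDist_zero_of_mem hU0, infDist_zero_of_mem]
    simp only [U, mem_compl_iff, mem_iUnion, not_exists]
    exact fun n hn => ht n ⟨t, hn⟩ (ball_subset_closedBall hn)
  · obtain ⟨δ, hδ, hδA⟩ := hL.exists_second_difference_lt hAβ (by positivity : 0 < ε / 4)
    obtain ⟨n, hn⟩ := ((tendsto_pow_atTop_nhds_zero_of_lt_one (by norm_num : (0 : ℝ) ≤ 2⁻¹)
      (by norm_num)).eventually (gt_mem_nhds hδ)).exists
    have hgrowth : s n * (ε / 4) ≤ infDist (s n • y n) Uᶜ := by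
      refine (le_infDist ⟨0, hU0⟩).2 fun z hz => ?_
      by_contra! h
      exact hz (mem_iUnion.2 ⟨n, by rwa [mem_ball, dist_comm]⟩)
    have := hδA (s n) (hs n) hn (y n) (hyA n).1
    rw [zero_add, zero_add, infDist_zero_of_mem hU0] at this
    linarith [infDist_nonneg (x := (-s n) • y n) (s := Uᶜ)]

end Counterexample

/-- `X` is a Gelfand-Phillips space iff Gâteaux and limited
differentiability coincide for real-valued Lipschitz functions. -/
theorem gelfandPhillips_iff_gateaux_eq_limited
    {X : Type*} [NormedAddCommGroup X] [NormedSpace ℝ X] [CompleteSpace X] :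
    (∀ A : Set X, IsLimitedSet A → IsCompact (closure A)) ↔
      ∀ f : X → ℝ, (∃ K : ℝ≥0, LipschitzWith K f) → ∀ x : X,
        ((∃ L : X →L[ℝ] ℝ, BetaDiffAt (gateauxB X) f x L) ↔
          (∃ L : X →L[ℝ] ℝ, BetaDiffAt (limitedB X) f x L)) := by
  constructor
  · rintro hGP f ⟨K, hf⟩ x
    have hTB : ∀ A ∈ limitedB X, TotallyBounded A :=
      fun A hA => (hGP A hA.2).totallyBounded.subset subset_closure
    exact ⟨fun ⟨L, hL⟩ => ⟨L, hL.of_gateauxB_of_lipschitzWith hf hTB⟩,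
      fun ⟨L, hL⟩ => ⟨L, hL.mono gateauxB_subset_limitedB⟩⟩
  · intro h A hA
    by_contra hAc
    have hA' : ¬TotallyBounded A :=
      fun hTB => hAc (hTB.closure.isCompact_of_isClosed isClosed_closure)
    have hne : A.Nonempty := nonempty_iff_ne_empty.2 fun hA0 => hA' (hA0 ▸ totallyBounded_empty)
    obtain ⟨f, hf, hG, hnot⟩ :=
      exists_lipschitzWith_gateaux_not_betaDiffAt hA.1 hA' (show A ∈ limitedB X from ⟨hne, hA⟩)
    obtain ⟨L, hL⟩ := (h f ⟨1, hf⟩ 0).1 ⟨0, hG⟩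
    exact hnot L hL
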